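/- There exists a sequence of binary matrices (M⁽ᵗ⁾)_{t≥2} such that for every t: (1) M⁽ᵗ⁾ is a 1-CFF with t rows and C(t, ⌊t/2⌋) columns, whose columns are the characteristic vectors of distinct ⌊t/2⌋-element subsets of {1,…,t}; and (2) M⁽ᵗ⁺¹⁾ has M⁽ᵗ⁾ as the submatrix formed by its first t rows and first C(t, ⌊t/2⌋) columns, and the restriction of its last row to the first C(t, ⌊t/2⌋) columns is either all zeros or all ones. Consequently (M⁽ᵗ⁾)_t is a nested family of 1-CFFs. -/
import Mathlib


/-- A binary `t × n` matrix `M` is a `d`-cover-free family (`d`-CFF(t,n)): for every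
column index `j₀` and every set `S` of `d` other column indices, there is a row `i`
with `M i j₀ = 1` and `M i j = 0` for all `j ∈ S`. -/
def IsCFF {t n : ℕ} (d : ℕ) (M : Fin t → Fin n → Bool) : Prop :=
  ∀ (j₀ : Fin n) (S : Finset (Fin n)), j₀ ∉ S → S.card = d →
    ∃ i : Fin t, M i j₀ = true ∧ ∀ j ∈ S, M i j = false

def CffData (t : ℕ) : Type :=
  {f : Fin (Nat.choose t (t / 2)) → Finset (Fin t) //
    Function.Injective f ∧ ∀ j, (f j).card = t / 2}

def gfun (t : ℕ) (B : Finset (Fin t)) : Finset (Fin (t + 1)) :=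
  if t % 2 = 0 then B.image Fin.castSucc
  else insert (Fin.last t) (B.image Fin.castSucc)

lemma last_not_mem_image {t : ℕ} (B : Finset (Fin t)) :
    Fin.last t ∉ B.image Fin.castSucc := by
  simp only [Finset.mem_image]
  rintro ⟨a, -, h⟩
  exact (Fin.castSucc_lt_last a).ne h

lemma mem_gfun_castSucc {t : ℕ} (B : Finset (Fin t)) (i : Fin t) :
    Fin.castSucc i ∈ gfun t B ↔ i ∈ B := by
  unfold gfun
  split <;>
    simp [Fin.castSucc_inj, (Fin.castSucc_lt_last i).ne]

lemma last_mem_gfun {t : ℕ} (B : Finset (Fin t)) :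
    Fin.last t ∈ gfun t B ↔ t % 2 = 1 := by
  unfold gfun
  have h := last_not_mem_image B
  split <;> simp_all <;> omega

lemma card_gfun {t : ℕ} (B : Finset (Fin t)) (hB : B.card = t / 2) :
    (gfun t B).card = (t + 1) / 2 := by
  have h := last_not_mem_image B
  have himg : (B.image Fin.castSucc).card = t / 2 := by
    rw [Finset.card_image_of_injective _ (Fin.castSucc_injective t), hB]
  unfold gfun
  split
  · omega
  · rw [Finset.card_insert_of_notMem h, himg]; omega

lemma gfun_inj {t : ℕ} : Function.Injective (gfun t) := by
  intro B B' h
  have key : B.image Fin.castSucc = B'.image Fin.castSucc := by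
    have h1 := last_not_mem_image B
    have h2 := last_not_mem_image B' 
    unfold gfun at h
    split at h
    · exact h
    · have := congrArg (fun s => Finset.erase s (Fin.last t)) h
      simpa [Finset.erase_insert h1, Finset.erase_insert h2] using this
  exact Finset.image_injective (Fin.castSucc_injective t) key

noncomputable section
open Classical

def stepImg (t : ℕ) (prev : CffData t) : Finset (Finset (Fin (t + 1))) :=
  Finset.univ.image (fun j => gfun t (prev.1 j))

def stepRem (t : ℕ) (prev : CffData t) : Finset (Finset (Fin (t + 1))) :=
  (Finset.univ.powersetCard ((t + 1) / 2)) \ stepImg t prev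

lemma stepImg_card (t : ℕ) (prev : CffData t) :
    (stepImg t prev).card = Nat.choose t (t / 2) := by
  rw [stepImg, Finset.card_image_of_injective _ (fun a b h => prev.2.1 (gfun_inj h) : Function.Injective fun j => gfun t (prev.1 j))]
  simp

lemma stepImg_subset (t : ℕ) (prev : CffData t) :
    stepImg t prev ⊆ Finset.univ.powersetCard ((t + 1) / 2) := by
  intro s hs
  simp only [stepImg, Finset.mem_image] at hs
  obtain ⟨j, _, rfl⟩ := hs
  rw [Finset.mem_powersetCard_univ]
  exact card_gfun _ (prev.2.2 j)

lemma choose_eq (t : ℕ) (prev : CffData t) :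
    Nat.choose (t + 1) ((t + 1) / 2) = Nat.choose t (t / 2) + (stepRem t prev).card := by
  have hU : (Finset.univ.powersetCard ((t + 1) / 2) : Finset (Finset (Fin (t+1)))).card
      = Nat.choose (t + 1) ((t + 1) / 2) := by
    simp [Finset.card_powersetCard]
  have hsub := stepImg_subset t prev
  have hle := Finset.card_le_card hsub
  rw [stepRem, Finset.card_sdiff_of_subset hsub, hU, stepImg_card]
  rw [hU, stepImg_card] at hle
  omega

def stepFun (t : ℕ) (prev : CffData t) :
    Fin (Nat.choose (t + 1) ((t + 1) / 2)) → Finset (Fin (t + 1)) := fun j =>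
  if h : (j : ℕ) < Nat.choose t (t / 2) then gfun t (prev.1 ⟨j, h⟩)
  else ((stepRem t prev).equivFin.symm
    ⟨(j : ℕ) - Nat.choose t (t / 2), by have := choose_eq t prev; have := j.2; omega⟩ : Finset (Fin (t+1)))

lemma stepFun_lt (t : ℕ) (prev : CffData t) (j : ℕ) (hj : j < Nat.choose t (t / 2))
    (hj' : j < Nat.choose (t + 1) ((t + 1) / 2)) :
    stepFun t prev ⟨j, hj'⟩ = gfun t (prev.1 ⟨j, hj⟩) := by
  simp [stepFun, hj]

lemma stepFun_ge_mem (t : ℕ) (prev : CffData t) (j : Fin (Nat.choose (t + 1) ((t + 1) / 2)))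
    (h : ¬ (j : ℕ) < Nat.choose t (t / 2)) :
    stepFun t prev j ∈ stepRem t prev := by
  rw [stepFun, dif_neg h]
  exact Finset.coe_mem _

lemma stepFun_card (t : ℕ) (prev : CffData t) (j : Fin (Nat.choose (t + 1) ((t + 1) / 2))) :
    (stepFun t prev j).card = (t + 1) / 2 := by
  by_cases h : (j : ℕ) < Nat.choose t (t / 2)
  · rw [show j = ⟨(j : ℕ), j.2⟩ from rfl, stepFun_lt t prev j h j.2]
    exact card_gfun _ (prev.2.2 _)
  · have hm := stepFun_ge_mem t prev j h
    rw [stepRem, Finset.mem_sdiff, Finset.mem_powersetCard_univ] at hm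
    exact hm.1

lemma stepFun_inj (t : ℕ) (prev : CffData t) : Function.Injective (stepFun t prev) := by
  intro a b hab
  by_cases ha : (a : ℕ) < Nat.choose t (t / 2) <;>
    by_cases hb : (b : ℕ) < Nat.choose t (t / 2)
  · rw [show a = ⟨(a:ℕ), a.2⟩ from rfl, stepFun_lt t prev a ha a.2,
      show b = ⟨(b:ℕ), b.2⟩ from rfl, stepFun_lt t prev b hb b.2] at hab
    have h2 := congrArg Fin.val (prev.2.1 (gfun_inj hab))
    exact Fin.ext h2
  · exfalso
    have hma : stepFun t prev a ∈ stepImg t prev := by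
      rw [show a = ⟨(a:ℕ), a.2⟩ from rfl, stepFun_lt t prev a ha a.2]
      exact Finset.mem_image_of_mem _ (Finset.mem_univ _)
    have hmb := stepFun_ge_mem t prev b hb
    rw [stepRem, Finset.mem_sdiff] at hmb
    exact hmb.2 (hab ▸ hma)
  · exfalso
    have hmb : stepFun t prev b ∈ stepImg t prev := by
      rw [show b = ⟨(b:ℕ), b.2⟩ from rfl, stepFun_lt t prev b hb b.2]
      exact Finset.mem_image_of_mem _ (Finset.mem_univ _)
    have hma := stepFun_ge_mem t prev a ha
    rw [stepRem, Finset.mem_sdiff] at hma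
    exact hma.2 (hab ▸ hmb)
  · rw [stepFun, dif_neg ha, stepFun, dif_neg hb] at hab
    have := (stepRem t prev).equivFin.symm.injective (Subtype.ext hab)
    have h2 := congrArg Fin.val this
    simp only at h2
    have := a.2
    have := b.2
    exact Fin.ext (by omega)

def cffStep (t : ℕ) (prev : CffData t) : CffData (t + 1) :=
  ⟨stepFun t prev, stepFun_inj t prev, stepFun_card t prev⟩

def cffData : (t : ℕ) → CffData t
  | 0 => ⟨fun _ => ∅, fun a b _ => by
      have ha := a.2; have hb := b.2
      have h1 : Nat.choose 0 (0 / 2) = 1 := rfl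
      exact Fin.ext (by omega), fun _ => rfl⟩
  | t + 1 => cffStep t (cffData t)

end

lemma cffData_succ_apply (t : ℕ) (j : ℕ) (hj : j < Nat.choose t (t / 2))
    (hj' : j < Nat.choose (t + 1) ((t + 1) / 2)) :
    (cffData (t + 1)).1 ⟨j, hj'⟩ = gfun t ((cffData t).1 ⟨j, hj⟩) := by
  show (cffStep t (cffData t)).1 ⟨j, hj'⟩ = _
  exact stepFun_lt t (cffData t) j hj hj'

/-- There is a sequence of binary matrices `(M⁽ᵗ⁾)`, where `M⁽ᵗ⁾` has `t` rows and
`C(t, ⌊t/2⌋)` columns, such that for every `t ≥ 2`: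
(1) `M⁽ᵗ⁾` is a `1`-CFF whose columns are the characteristic vectors of distinct
`⌊t/2⌋`-element subsets of `{1,…,t}`; and
(2) `M⁽ᵗ⁾` is the submatrix of `M⁽ᵗ⁺¹⁾` formed by its first `t` rows and first
`C(t, ⌊t/2⌋)` columns, and the last row of `M⁽ᵗ⁺¹⁾`, restricted to the first
`C(t, ⌊t/2⌋)` columns, is either all zeros or all ones.
Consequently `(M⁽ᵗ⁾)_t` is a nested family of `1`-CFFs. -/
theorem exists_nested_one_cff_family :
    ∃ M : (t : ℕ) → Fin t → Fin (Nat.choose t (t / 2)) → Bool,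
      ∀ t : ℕ, 2 ≤ t →
        (IsCFF 1 (M t) ∧
          ∃ Bsets : Fin (Nat.choose t (t / 2)) → Finset (Fin t),
            Function.Injective Bsets ∧ (∀ j, (Bsets j).card = t / 2) ∧
            ∀ i j, M t i j = decide (i ∈ Bsets j)) ∧
        (∀ (i : ℕ) (hi : i < t) (hi' : i < t + 1)
            (j : ℕ) (hj : j < Nat.choose t (t / 2))
            (hj' : j < Nat.choose (t + 1) ((t + 1) / 2)),
            M (t + 1) ⟨i, hi'⟩ ⟨j, hj'⟩ = M t ⟨i, hi⟩ ⟨j, hj⟩) ∧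
        ((∀ (j : ℕ) (hj : j < Nat.choose t (t / 2))
             (hj' : j < Nat.choose (t + 1) ((t + 1) / 2)),
             M (t + 1) ⟨t, Nat.lt_succ_self t⟩ ⟨j, hj'⟩ = false) ∨
         (∀ (j : ℕ) (hj : j < Nat.choose t (t / 2))
             (hj' : j < Nat.choose (t + 1) ((t + 1) / 2)),
             M (t + 1) ⟨t, Nat.lt_succ_self t⟩ ⟨j, hj'⟩ = true)) := by
  classical
  refine ⟨fun t i j => decide (i ∈ (cffData t).1 j), fun t _ => ⟨⟨?_, (cffData t).1,
    (cffData t).2.1, (cffData t).2.2, fun i j => rfl⟩, ?_, ?_⟩⟩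
  · intro j₀ S hj₀ hS
    obtain ⟨j, rfl⟩ := Finset.card_eq_one.mp hS
    have hne : (cffData t).1 j₀ ≠ (cffData t).1 j := by
      intro h
      exact hj₀ (by simp [(cffData t).2.1 h])
    have hns : ¬ (cffData t).1 j₀ ⊆ (cffData t).1 j := fun hsub =>
      hne (Finset.eq_of_subset_of_card_le hsub
        (le_of_eq (((cffData t).2.2 j).trans ((cffData t).2.2 j₀).symm)))
    obtain ⟨i, hi1, hi2⟩ := Finset.not_subset.mp hns
    refine ⟨i, by simpa using hi1, fun j' hj' => ?_⟩
    simp only [Finset.mem_singleton] at hj'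
    subst hj'
    simpa using hi2
  · intro i hi hi' j hj hj'
    beta_reduce
    rw [cffData_succ_apply t j hj hj']
    have h1 : (⟨i, hi'⟩ : Fin (t + 1)) = Fin.castSucc ⟨i, hi⟩ := rfl
    rw [h1]
    exact decide_eq_decide.mpr (mem_gfun_castSucc _ _)
  · have h1 : (⟨t, Nat.lt_succ_self t⟩ : Fin (t + 1)) = Fin.last t := rfl
    rcases Nat.even_or_odd t with he | ho
    · left
      intro j hj hj'
      beta_reduce
      rw [cffData_succ_apply t j hj hj', h1]
      simp [last_mem_gfun, Nat.even_iff.mp he]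
    · right
      intro j hj hj'
      beta_reduce
      rw [cffData_succ_apply t j hj hj', h1]
      simp [last_mem_gfun, Nat.odd_iff.mp ho]
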